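/- arXiv:1811.02327 — 2 statements merged into one kernel-verified Lean document; each statement's English description precedes it below -/
import Mathlib

section
/- Let n ≥ 2 be a finite ordinal, let A ∈ SC_n be complete and atomic, let x, y, z be atoms of A, and let i,j ∈ n. If y ≤ s^i_j c_j x and z = t^j_i x, then c_i z = c_i y. -/
namespace CylRep

/-- The replacement `[i/j]` on `n`: fixes everything except sending `i` to `j`. -/
def replFn (n : ℕ) (i j : Fin n) : Fin n → Fin n := fun k => if k = i then j else k

/-- A Boolean algebra equipped with cylindric-type operators: cylindrifications `c i`
and diagonal elements `d i j`. -/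
structure CylOps (n : ℕ) (α : Type*) [BooleanAlgebra α] where
  c : Fin n → α → α
  d : Fin n → Fin n → α

variable {n : ℕ} {α : Type*} {β : Type*}

section Ops
variable [BooleanAlgebra α]

/-- The substitution operator `s^i_j`: `s^i_i x = x`, and `s^i_j x = c_i (x ⊓ d_{ij})` for `i ≠ j`. -/
def CylOps.s (A : CylOps n α) (i j : Fin n) (x : α) : α :=
  if i = j then x else A.c i (x ⊓ A.d i j)

/-- The operator `t^i_j`: `t^i_i x = x`, and `t^i_j x = c_i x ⊓ d_{ij}` for `i ≠ j`. -/
def CylOps.t (A : CylOps n α) (i j : Fin n) (x : α) : α :=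
  if i = j then x else A.c i x ⊓ A.d i j

/-- The term `s^i_j c_j x ⊓ s^j_i c_i x ⊓ ∏_{k ≠ i,j} s^k_i s^i_j s^j_k c_k x`
(the empty product, when `n = 2`, is `⊤`). -/
def CylOps.pRaw (A : CylOps n α) (i j : Fin n) (x : α) : α :=
  A.s i j (A.c j x) ⊓ A.s j i (A.c i x) ⊓
    (Finset.univ.filter (fun k : Fin n => k ≠ i ∧ k ≠ j)).inf
      (fun k => A.s k i (A.s i j (A.s j k (A.c k x))))

/-- The operator `p_{ij}`: `p_{ii} x = x`, and otherwise the term `pRaw`. -/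
def CylOps.p (A : CylOps n α) (i j : Fin n) (x : α) : α :=
  if i = j then x else A.pRaw i j x

/-- `tauSeq is js t = [i_t/j_t] ∘ ⋯ ∘ [i_1/j_1]` (0-indexed: composes the first `t`
replacements, the one of index `0` acting first); `tauSeq is js 0 = id`. -/
def tauSeq (is js : ℕ → Fin n) : ℕ → (Fin n → Fin n)
  | 0 => id
  | t + 1 => replFn n (is t) (js t) ∘ tauSeq is js t

/-- `lhsSeq A is js ks x m = s^{i_m}_{j_m} c_{k_m} ⋯ s^{i_1}_{j_1} c_{k_1} x` (0-indexed). -/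
def lhsSeq (A : CylOps n α) (is js ks : ℕ → Fin n) (x : α) : ℕ → α
  | 0 => x
  | t + 1 => A.s (is t) (js t) (A.c (ks t) (lhsSeq A is js ks x t))

/-- The set `K = {i_1, …, i_m, k_1, …, k_m} \ {i}` (0-indexed). -/
def Kset (m : ℕ) (is ks : ℕ → Fin n) (i : Fin n) : Finset (Fin n) :=
  (((Finset.range m).image is) ∪ ((Finset.range m).image ks)).erase i

/-- Axiom (Ax7): for every `m ≥ 1` and all indices `i_1,…,i_m, j_1,…,j_m, k_1,…,k_m, i`
such that `k_{t+1} ∉ ([i_t/j_t]∘⋯∘[i_1/j_1]) * K` for all `t < m`,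
`s^{i_m}_{j_m} c_{k_m} ⋯ s^{i_1}_{j_1} c_{k_1} x ⊓ ∏ {d_{l, τ l} : l ∈ K} ≤ c_i x`,
where `τ = [i_m/j_m]∘⋯∘[i_1/j_1]` and `K = {i_1,…,i_m,k_1,…,k_m} \ {i}`. -/
def Ax7 (A : CylOps n α) : Prop :=
  ∀ m : ℕ, 1 ≤ m → ∀ (is js ks : ℕ → Fin n) (i : Fin n),
    (∀ t < m, ks t ∉ (Kset m is ks i).image (tauSeq is js t)) →
    ∀ x : α,
      lhsSeq A is js ks x m ⊓
          (Kset m is ks i).inf (fun l => A.d l (tauSeq is js m l)) ≤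
        A.c i x

/-- Axiom (Ax11) (stated for general `n` via proofs that `0 < n` and `1 < n`):
`x ⊓ -d_{01} ≤ c_0 c_1 (-d_{01} ⊓ s^0_1 c_1 x ⊓ s^1_0 c_0 x)`. -/
def Ax11 (A : CylOps n α) : Prop :=
  ∀ (h0 : 0 < n) (h1 : 1 < n) (x : α),
    x ⊓ (A.d ⟨0, h0⟩ ⟨1, h1⟩)ᶜ ≤
      A.c ⟨0, h0⟩ (A.c ⟨1, h1⟩
        ((A.d ⟨0, h0⟩ ⟨1, h1⟩)ᶜ ⊓ A.s ⟨0, h0⟩ ⟨1, h1⟩ (A.c ⟨1, h1⟩ x) ⊓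
          A.s ⟨1, h1⟩ ⟨0, h0⟩ (A.c ⟨0, h0⟩ x)))

/-- Axiom (Ax12): `x ≤ c_i c_j (s^i_j c_j x ⊓ s^j_i c_i x ⊓ ∏_{k≠i,j} s^k_i s^i_j s^j_k c_k x)`. -/
def Ax12 (A : CylOps n α) : Prop :=
  ∀ (i j : Fin n) (x : α), x ≤ A.c i (A.c j (A.pRaw i j x))

/-- Axioms (Ax0)–(Ax6) ((Ax0), the Boolean axioms, being the `BooleanAlgebra` instance). -/
structure IsRC6 (A : CylOps n α) : Prop where
  ax1 : ∀ i, A.c i (⊥ : α) = ⊥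
  ax2 : ∀ i (x : α), x ≤ A.c i x
  ax3 : ∀ i (x y : α), A.c i (x ⊓ A.c i y) = A.c i x ⊓ A.c i y
  ax4 : ∀ i, A.d i i = (⊤ : α)
  ax5 : ∀ i j k : Fin n, k ≠ i → k ≠ j →
    A.d i k ⊓ A.d k j ≤ A.d i j ∧ A.d i j = A.d j i ∧ A.d j i = A.c k (A.d j i)
  ax6 : ∀ (i j : Fin n) (x : α), i ≠ j → A.c i (x ⊓ A.d i j) ⊓ A.d i j ≤ x

/-- The class `RC_n`: axioms (Ax0)–(Ax7). -/
structure IsRC (A : CylOps n α) extends IsRC6 A : Prop where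
  ax7 : Ax7 A

/-- Axioms (Ax8)–(Ax10). -/
structure DCAxioms (A : CylOps n α) : Prop where
  ax8 : ∀ (i j k : Fin n) (x : α), k ≠ i → k ≠ j →
    A.c j (A.c i x) ⊓ A.d j k ≤ A.c i (A.c j x)
  ax9 : ∀ i j k : Fin n, k ≠ i → k ≠ j → A.d i j = A.c k (A.d i k ⊓ A.d k j)
  ax10 : ∀ (i j k m : Fin n) (x : α), k ≠ i → k ≠ j → k ≠ m → m ≠ i → m ≠ j →
    A.s k i (A.s i j (A.s j m (A.s m k (A.c k x)))) =
      A.s k m (A.s m i (A.s i j (A.s j k (A.c k x))))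

/-- The class `DC_n`: axioms (Ax0)–(Ax10). -/
structure IsDC (A : CylOps n α) extends IsRC A, DCAxioms A : Prop

/-- The class `SC_n`: `DC_n` together with (Ax11) when `n = 2` and (Ax12) when `n ≥ 3`. -/
structure IsSC (A : CylOps n α) extends IsDC A : Prop where
  ax11 : n = 2 → Ax11 A
  ax12 : 3 ≤ n → Ax12 A

/-- The class `DC_n⁻`: the axioms of `DC_n` with (Ax7) omitted. -/
structure IsDCminus (A : CylOps n α) extends IsRC6 A, DCAxioms A : Prop

/-- The class `SC_n⁻`: the axioms of `SC_n` with (Ax7) omitted. -/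
structure IsSCminus (A : CylOps n α) extends IsDCminus A : Prop where
  ax11 : n = 2 → Ax11 A
  ax12 : 3 ≤ n → Ax12 A

/-- `compList n [(i₁,j₁),…,(iₘ,jₘ)] = [i₁/j₁] ∘ ⋯ ∘ [iₘ/jₘ]` (so `[iₘ/jₘ]` acts first). -/
def compList (n : ℕ) (L : List (Fin n × Fin n)) : Fin n → Fin n :=
  L.foldr (fun p g => replFn n p.1 p.2 ∘ g) id

/-- `tApplyList A [(i₁,j₁),…,(iₘ,jₘ)] x = t^{iₘ}_{jₘ} ⋯ t^{i₁}_{j₁} x`. -/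
def tApplyList (A : CylOps n α) (L : List (Fin n × Fin n)) (x : α) : α :=
  L.foldl (fun y p => A.t p.1 p.2 y) x

end Ops

/-- The three classes of algebras considered. -/
inductive CylClass : Type
  | RC | DC | SC

/-- Membership of `A` in the class `K_n` for `K ∈ {RC, DC, SC}`. -/
def InClass [BooleanAlgebra α] (κ : CylClass) (A : CylOps n α) : Prop :=
  match κ with
  | CylClass.RC => IsRC A
  | CylClass.DC => IsDC A
  | CylClass.SC => IsSC A

/-- A pre-network: a finite set of nodes together with a partial map (here: a total map
`label` whose meaningful domain is `edges`) from `n`-sequences of nodes to atoms of `α`. -/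
structure PreNetwork (n : ℕ) (α : Type*) (β : Type*) [BooleanAlgebra α] where
  nodes : Finset β
  edges : Set (Fin n → β)
  label : (Fin n → β) → α
  edge_nodes : ∀ f ∈ edges, ∀ i, f i ∈ nodes
  label_atom : ∀ f ∈ edges, IsAtom (label f)

/-- `g ≡_i f`: the sequences agree everywhere except possibly at `i`. -/
def EqExcept (i : Fin n) (f g : Fin n → β) : Prop := ∀ l, l ≠ i → f l = g l

/-- A set of sequences is diagonalizable if it is closed under `f ↦ f ∘ [i/j]`. -/
def Diagonalizable (E : Set (Fin n → β)) : Prop :=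
  ∀ f ∈ E, ∀ i j : Fin n, (f ∘ replFn n i j) ∈ E

/-- A set of sequences is permutable if it is closed under `f ↦ f ∘ [i,j]`. -/
def Permutable (E : Set (Fin n → β)) : Prop :=
  ∀ f ∈ E, ∀ i j : Fin n, (fun k => f (Equiv.swap i j k)) ∈ E

section Net
variable [BooleanAlgebra α]

/-- `h 0, …, h m` is a zigzag from `f` to `g` in the pre-network `N`. -/
def IsZigzag (A : CylOps n α) (N : PreNetwork n α β) (f g : Fin n → β)
    (m : ℕ) (h : ℕ → Fin n → β) : Prop :=
  h 0 = f ∧ h m = g ∧ (∀ t ≤ m, h t ∈ N.edges) ∧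
    (∀ t ≤ m, Set.range f ∩ Set.range g ⊆ Set.range (h t)) ∧
    (∀ t < m, ∃ i : Fin n, h t ≠ h (t + 1) ∧ EqExcept i (h t) (h (t + 1)) ∧
      A.c i (N.label (h t)) = A.c i (N.label (h (t + 1))))

/-- `N` is a network (for the class `κ` over the algebra `A`). -/
def IsNetwork (κ : CylClass) (A : CylOps n α) (N : PreNetwork n α β) : Prop :=
  (κ = CylClass.DC → Diagonalizable N.edges) ∧
  (κ = CylClass.SC → Diagonalizable N.edges ∧ Permutable N.edges) ∧
  (∀ f ∈ N.edges, ∀ i j : Fin n, N.label f ≤ A.d i j ↔ f i = f j) ∧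
  (∀ f ∈ N.edges, ∀ g ∈ N.edges,
    0 < (Set.range f ∩ Set.range g).ncard →
    (Set.range f ∩ Set.range g).ncard < n →
    ∃ m h, IsZigzag A N f g m h)

/-- `N ⊆ N'` for pre-networks. -/
def PNLe (N N' : PreNetwork n α β) : Prop :=
  N.nodes ⊆ N'.nodes ∧ N.edges ⊆ N'.edges ∧ ∀ f ∈ N.edges, N'.label f = N.label f

end Net

/-- The cylindrification `C_i` relativized to the unit `V`. -/
def CSet (V : Set (Fin n → β)) (i : Fin n) (X : Set (Fin n → β)) : Set (Fin n → β) :=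
  {f ∈ V | ∃ g ∈ X, ∀ l, l ≠ i → g l = f l}

/-- The diagonal `D_{ij}` relativized to the unit `V`. -/
def DSet (V : Set (Fin n → β)) (i j : Fin n) : Set (Fin n → β) :=
  {f ∈ V | f i = f j}

/-- `Ψ` is an embedding of `A` into the full relativized cylindric set algebra `P(V)`:
an injective Boolean homomorphism that sends `c_i` to `C_i` and `d_{ij}` to `D_{ij}`. -/
def IsRepresentation [BooleanAlgebra α] (A : CylOps n α) (V : Set (Fin n → β))
    (Ψ : α → Set (Fin n → β)) : Prop :=
  Function.Injective Ψ ∧ (∀ x, Ψ x ⊆ V) ∧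
    Ψ ⊥ = ∅ ∧ Ψ ⊤ = V ∧ (∀ x y, Ψ (x ⊔ y) = Ψ x ∪ Ψ y) ∧
    (∀ x y, Ψ (x ⊓ y) = Ψ x ∩ Ψ y) ∧ (∀ x, Ψ xᶜ = V \ Ψ x) ∧
    (∀ (i : Fin n) (x : α), Ψ (A.c i x) = CSet V i (Ψ x)) ∧
    (∀ i j : Fin n, Ψ (A.d i j) = DSet V i j)


section Aux

variable [BooleanAlgebra α] {A : CylOps n α}

/-- Cylindrification is monotone. -/
lemma c_mono_aux (h6 : IsRC6 A) (i : Fin n) {x y : α} (h : x ≤ y) :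
    A.c i x ≤ A.c i y := by
  have hxy : x ⊓ A.c i y = x := inf_eq_left.mpr (h.trans (h6.ax2 i y))
  calc A.c i x = A.c i (x ⊓ A.c i y) := by rw [hxy]
    _ = A.c i x ⊓ A.c i y := h6.ax3 i x y
    _ ≤ A.c i y := inf_le_right

/-- Cylindrification is idempotent. -/
lemma c_idem_aux (h6 : IsRC6 A) (i : Fin n) (x : α) :
    A.c i (A.c i x) = A.c i x := by
  have htop : A.c i (⊤ : α) = ⊤ := le_antisymm le_top (le_top.trans (h6.ax2 i ⊤))
  calc A.c i (A.c i x) = A.c i (⊤ ⊓ A.c i x) := by rw [top_inf_eq]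
    _ = A.c i ⊤ ⊓ A.c i x := h6.ax3 i ⊤ x
    _ = A.c i x := by rw [htop, top_inf_eq]

/-- The swap (conjugation) lemma: if `b ⊓ c_i a = ⊥` then `a ⊓ c_i b = ⊥`. -/
lemma swap_bot_aux (h6 : IsRC6 A) (i : Fin n) {a b : α}
    (h : b ⊓ A.c i a = ⊥) : a ⊓ A.c i b = ⊥ := by
  have hb : b ≤ (A.c i a)ᶜ := le_compl_iff_disjoint_right.mpr (disjoint_iff.mpr h)
  have h1 : A.c i b ≤ A.c i ((A.c i a)ᶜ) := c_mono_aux h6 i hb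
  have h2 : A.c i ((A.c i a)ᶜ ⊓ A.c i a) = A.c i ((A.c i a)ᶜ) ⊓ A.c i a :=
    h6.ax3 i _ a
  have h3 : A.c i ((A.c i a)ᶜ) ⊓ A.c i a = ⊥ := by
    rw [← h2, compl_inf_eq_bot, h6.ax1 i]
  refine le_bot_iff.mp ?_
  calc a ⊓ A.c i b ≤ A.c i a ⊓ A.c i ((A.c i a)ᶜ) :=
        inf_le_inf (h6.ax2 i a) h1
    _ = ⊥ := by rw [inf_comm, h3]

/-- An atom meeting an element nontrivially lies below it. -/
lemma atom_le_of_inf_ne_bot {b t : α} (hb : IsAtom b) (h : b ⊓ t ≠ ⊥) : b ≤ t := by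
  by_contra hle
  have hlt : b ⊓ t < b := lt_of_le_of_ne inf_le_left (by
    intro he
    exact hle (inf_eq_left.mp he))
  exact h (hb.2 _ hlt)

/-- For atoms `a, b`: if `a ≤ c_i b` then `c_i a = c_i b`. -/
lemma c_atom_eq_aux (h6 : IsRC6 A) (i : Fin n) {a b : α}
    (ha : IsAtom a) (hb : IsAtom b) (h : a ≤ A.c i b) :
    A.c i a = A.c i b := by
  have hne : a ⊓ A.c i b ≠ ⊥ := by
    rw [inf_eq_left.mpr h]; exact ha.1
  have hne2 : b ⊓ A.c i a ≠ ⊥ := fun hc => hne (swap_bot_aux h6 i hc)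
  have hba : b ≤ A.c i a := atom_le_of_inf_ne_bot hb hne2
  refine le_antisymm ?_ ?_
  · calc A.c i a ≤ A.c i (A.c i b) := c_mono_aux h6 i h
      _ = A.c i b := c_idem_aux h6 i b
  · calc A.c i b ≤ A.c i (A.c i a) := c_mono_aux h6 i hba
      _ = A.c i a := c_idem_aux h6 i a

/-- The key instance of (Ax7) with `m = 2`: `s^i_j c_j s^j_i c_i x ≤ c_i x`. -/
lemma ax7_instance (hA : IsRC A) {i j : Fin n} (hij : i ≠ j) (x : α) :
    A.s i j (A.c j (A.s j i (A.c i x))) ≤ A.c i x := by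
  have h6 : IsRC6 A := hA.toIsRC6
  set isf : ℕ → Fin n := fun t => if t = 0 then j else i with hisf
  set jsf : ℕ → Fin n := fun t => if t = 0 then i else j with hjsf
  have hK : Kset 2 isf jsf i = {j} := by
    ext k
    simp only [Kset, Finset.mem_erase, Finset.mem_union, Finset.mem_image,
      Finset.mem_range, Finset.mem_singleton]
    constructor
    · rintro ⟨hki, (⟨t, ht, rfl⟩ | ⟨t, ht, rfl⟩)⟩
      · by_cases h0 : t = 0
        · simp [hisf, h0]
        · exfalso; apply hki; simp [hisf, h0]
      · by_cases h0 : t = 0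
        · exfalso; apply hki; simp [hjsf, h0]
        · simp [hjsf, h0]
    · rintro rfl
      exact ⟨fun h => hij h.symm, Or.inl ⟨0, by norm_num, by simp [hisf]⟩⟩
  have htau1 : tauSeq isf jsf 1 = replFn n j i ∘ id := by
    show replFn n (isf 0) (jsf 0) ∘ tauSeq isf jsf 0 = _
    simp [hisf, hjsf, tauSeq]
  have htau2 : tauSeq isf jsf 2 = replFn n i j ∘ tauSeq isf jsf 1 := by
    show replFn n (isf 1) (jsf 1) ∘ tauSeq isf jsf 1 = _
    simp [hisf, hjsf]
  have hcond : ∀ t < 2, jsf t ∉ (Kset 2 isf jsf i).image (tauSeq isf jsf t) := by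
    intro t ht
    interval_cases t
    · rw [hK]
      simp only [tauSeq, Finset.image_id, Finset.mem_singleton, hjsf]
      exact hij
    · rw [hK, htau1]
      simp only [Finset.image_singleton, Finset.mem_singleton, hjsf, Function.comp, id]
      simp only [if_neg one_ne_zero, replFn, if_pos rfl]
      exact fun h => hij h.symm
  have key := hA.ax7 2 (by norm_num) isf jsf jsf i hcond x
  have hlhs : lhsSeq A isf jsf jsf x 2 =
      A.s i j (A.c j (A.s j i (A.c i x))) := by
    show A.s (isf 1) (jsf 1) (A.c (jsf 1)
        (A.s (isf 0) (jsf 0) (A.c (jsf 0) (lhsSeq A isf jsf jsf x 0)))) = _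
    simp [hisf, hjsf, lhsSeq]
  have hinf : (Kset 2 isf jsf i).inf (fun l => A.d l (tauSeq isf jsf 2 l)) = ⊤ := by
    rw [hK, Finset.inf_singleton, htau2, htau1]
    simpa [replFn] using h6.ax4 j
  rw [hlhs, hinf, inf_top_eq] at key
  exact key

end Aux

/-- for complete atomic `A ∈ SC_n`, atoms `x, y, z` and `i, j ∈ n`:
if `y ≤ s^i_j c_j x` and `z = t^j_i x` then `c_i z = c_i y`. -/
theorem statement_5 (n : ℕ) (hn : 2 ≤ n) {α : Type*}
    [CompleteBooleanAlgebra α] [IsAtomic α]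
    (A : CylOps n α) (hA : IsSC A) (x y z : α)
    (hx : IsAtom x) (hy : IsAtom y) (hz : IsAtom z)
    (i j : Fin n)
    (h1 : y ≤ A.s i j (A.c j x)) (h2 : z = A.t j i x) :
    A.c i z = A.c i y := by
  have hRC : IsRC A := hA.toIsDC.toIsRC
  have h6 : IsRC6 A := hRC.toIsRC6
  by_cases hij : i = j
  · subst hij
    rw [CylOps.s, if_pos rfl] at h1
    rw [CylOps.t, if_pos rfl] at h2
    subst h2
    exact (c_atom_eq_aux h6 i hy hx h1).symm
  · have hji : j ≠ i := fun h => hij h.symm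
    rw [CylOps.s, if_neg hij] at h1
    rw [CylOps.t, if_neg hji] at h2
    -- h1 : y ≤ c_i (c_j x ⊓ d i j),  h2 : z = c_j x ⊓ d j i
    have hy0 : y ⊓ A.c i (A.c j x ⊓ A.d i j) ≠ ⊥ := by
      rw [inf_eq_left.mpr h1]; exact hy.1
    have hw0 : (A.c j x ⊓ A.d i j) ⊓ A.c i y ≠ ⊥ := by
      intro hc
      exact hy0 (swap_bot_aux h6 i hc)
    obtain ⟨w, hw, hwle⟩ :=
      (eq_bot_or_exists_atom_le ((A.c j x ⊓ A.d i j) ⊓ A.c i y)).resolve_left hw0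
    have hw1 : w ≤ A.c j x := hwle.trans (inf_le_left.trans inf_le_left)
    have hw2 : w ≤ A.d i j := hwle.trans (inf_le_left.trans inf_le_right)
    have hw3 : w ≤ A.c i y := hwle.trans inf_le_right
    have hciw : A.c i w = A.c i y := c_atom_eq_aux h6 i hw hy hw3
    have hcjw : A.c j w = A.c j x := c_atom_eq_aux h6 j hw hx hw1
    -- z facts
    have hz1 : z ≤ A.c j x := h2.le.trans inf_le_left
    have hz2 : z ≤ A.d j i := h2.le.trans inf_le_right
    have hcjz : A.c j z = A.c j x := c_atom_eq_aux h6 j hz hx hz1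
    have hwcjz : w ≤ A.c j z := by
      calc w ≤ A.c j w := h6.ax2 j w
        _ = A.c j x := hcjw
        _ = A.c j z := hcjz.symm
    -- use the Ax7 instance applied with x := z
    have key : A.s i j (A.c j (A.s j i (A.c i z))) ≤ A.c i z :=
      ax7_instance hRC hij z
    have step1 : z ≤ A.c i z ⊓ A.d j i := le_inf (h6.ax2 i z) hz2
    have step2 : A.c j z ≤ A.s j i (A.c i z) := by
      rw [CylOps.s, if_neg hji]
      exact c_mono_aux h6 j step1
    have step3 : w ≤ A.s j i (A.c i z) := hwcjz.trans step2
    have step4 : w ≤ A.c j (A.s j i (A.c i z)) ⊓ A.d i j :=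
      le_inf (step3.trans (h6.ax2 j _)) hw2
    have step5 : A.c i w ≤ A.c i z := by
      calc A.c i w ≤ A.c i (A.c j (A.s j i (A.c i z)) ⊓ A.d i j) :=
            c_mono_aux h6 i step4
        _ = A.s i j (A.c j (A.s j i (A.c i z))) := by simp [CylOps.s, hij, hji]
        _ ≤ A.c i z := key
    have hwz : w ≤ A.c i z := (h6.ax2 i w).trans step5
    have : A.c i w = A.c i z := c_atom_eq_aux h6 i hw hz hwz
    rw [← this, hciw]

end CylRep
end

section
/- Let K ∈ {RC, DC, SC}, let A ∈ K_n be complete and atomic, and let N be a network over A. If f, g ∈ edges(N) and i ∈ n satisfy f ≡_i g, then c_i N(f) = c_i N(g). -/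
namespace CylRep

variable {n : ℕ} {α : Type*} {β : Type*}

/-! Read the zigzag from `g` to `f` as a walk `g = h 0, …, h m = f` in which each move changes
one coordinate `k` and keeps `c_k` of the label. Preceded by a `c_i`, the labels stay below the
terms `s^{i_t}_{j_t} c_{k_t} ⋯ s^{i_1}_{j_1} c_{k_1} N(g)` of (Ax7), the replacements
`[i_t/j_t]` tracking a coordinate that carries `g l` for each `l ≠ i`. When a move is about to
overwrite a tracked coordinate, its value also sits at a second coordinate (it survives into the
next edge, since every edge of a zigzag contains `Rng f ∩ Rng g`), and `s^{i_t}_{j_t}` moves the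
tracking there. At the end the tracked coordinate `τ l` of `f` carries `g l = f l`, so
`N(f) ≤ d_{l, τ l}` and (Ax7) gives `N(f) ≤ c_i N(g)`; by symmetry the cylindrifications agree. -/

section Algebra

variable [BooleanAlgebra α] {A : CylOps n α}

theorem IsRC6.c_le_of_le_c (hA : IsRC6 A) {i : Fin n} {x y : α} (h : x ≤ A.c i y) :
    A.c i x ≤ A.c i y := by
  have hx : x ⊓ A.c i y = x := inf_eq_left.2 h
  calc A.c i x = A.c i x ⊓ A.c i y := by rw [← hA.ax3, hx]
    _ ≤ A.c i y := inf_le_right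

theorem IsRC6.c_mono (hA : IsRC6 A) {i : Fin n} {x y : α} (h : x ≤ y) : A.c i x ≤ A.c i y :=
  hA.c_le_of_le_c (h.trans (hA.ax2 i y))

theorem IsRC6.le_s (hA : IsRC6 A) {a y : α} {i j : Fin n} (hy : a ≤ y)
    (hd : i ≠ j → a ≤ A.d i j) : a ≤ A.s i j y := by
  unfold CylOps.s
  split_ifs with hij
  · exact hy
  · exact (le_inf hy (hd hij)).trans (hA.ax2 i _)

theorem InClass.isRC {κ : CylClass} (hA : InClass κ A) : IsRC A := by
  cases κ with
  | RC => exact hA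
  | DC => exact hA.toIsRC
  | SC => exact hA.toIsRC

end Algebra

section Sequences

variable {i k : Fin n} {f g u v : Fin n → β}

theorem EqExcept.symm (hfg : EqExcept i f g) : EqExcept i g f :=
  fun l hl => (hfg l hl).symm

theorem EqExcept.eq_of_apply_eq (hfg : EqExcept i f g) (hi : f i = g i) : f = g := by
  funext l
  by_cases hl : l = i
  · exact hl ▸ hi
  · exact hfg l hl

theorem EqExcept.ncard_range_inter_pos (hfg : EqExcept i f g) (hn : 2 ≤ n) :
    0 < (Set.range f ∩ Set.range g).ncard := by
  obtain ⟨l, hl⟩ := Fintype.exists_ne_of_one_lt_card (by rw [Fintype.card_fin]; omega) i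
  exact (Set.ncard_pos ((Set.finite_range f).inter_of_left _)).2
    ⟨f l, ⟨l, rfl⟩, ⟨l, (hfg l hl).symm⟩⟩

theorem EqExcept.ncard_range_inter_lt (hfg : EqExcept i f g) (hne : f ≠ g) :
    (Set.range f ∩ Set.range g).ncard < n := by
  have hsub : Set.range f ∩ Set.range g ⊆ f '' {i}ᶜ := by
    rintro _ ⟨⟨a, rfl⟩, ⟨b, hb⟩⟩
    by_cases ha : a = i
    · subst ha
      have hbi : b ≠ a := fun hba => hne (hfg.eq_of_apply_eq (hba ▸ hb).symm)
      exact ⟨b, hbi, (hfg b hbi).trans hb⟩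
    · exact ⟨a, ha, rfl⟩
  calc (Set.range f ∩ Set.range g).ncard ≤ (f '' {i}ᶜ).ncard := Set.ncard_le_ncard hsub
    _ ≤ ({i}ᶜ : Set (Fin n)).ncard := Set.ncard_image_le
    _ < (Set.univ : Set (Fin n)).ncard :=
      Set.ncard_lt_ncard
        (Set.ssubset_univ_iff.2 (Set.compl_ne_univ.2 (Set.singleton_nonempty i)))
    _ = n := by simp

open Classical in
noncomputable def dupIndex (u : Fin n → β) (k : Fin n) : Fin n :=
  if hk : ∃ q ≠ k, u q = u k then hk.choose else k

theorem apply_dupIndex (u : Fin n → β) (k : Fin n) : u (dupIndex u k) = u k := by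
  unfold dupIndex
  split_ifs with hk
  exacts [hk.choose_spec.2, rfl]

theorem dupIndex_ne (hk : ∃ q ≠ k, u q = u k) : dupIndex u k ≠ k := by
  simpa [dupIndex, hk] using hk.choose_spec.1

theorem apply_replFn_dupIndex (u : Fin n → β) (k p : Fin n) :
    u (replFn n k (dupIndex u k) p) = u p := by
  unfold replFn
  split_ifs with hp
  · rw [apply_dupIndex u k, hp]
  · rfl

theorem replFn_dupIndex_ne (huv : EqExcept k u v) (hne : u ≠ v) {p : Fin n}
    (hp : u p ∈ Set.range v) : replFn n k (dupIndex u k) p ≠ k := by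
  unfold replFn
  split_ifs with hpk
  · subst hpk
    obtain ⟨q, hq⟩ := hp
    have hqp : q ≠ p := by
      rintro rfl
      exact hne (huv.eq_of_apply_eq hq.symm)
    exact dupIndex_ne ⟨q, hqp, (huv q hqp).trans hq⟩
  · exact hpk

end Sequences

section Walk

/-- Along a walk `h` whose `t`-th move changes coordinate `ks (t + 1)`, step `t` of (Ax7)
substitutes `ks (t + 1)` by a coordinate of `h t` carrying the same value. -/
def walkIs (ks : ℕ → Fin n) : ℕ → Fin n := fun t => ks (t + 1)

noncomputable def walkJs (h : ℕ → Fin n → β) (ks : ℕ → Fin n) : ℕ → Fin n :=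
  fun t => dupIndex (h t) (ks (t + 1))

theorem apply_tauSeq_walk_succ (h : ℕ → Fin n → β) (ks : ℕ → Fin n) (t : ℕ) (l : Fin n) :
    h t (tauSeq (walkIs ks) (walkJs h ks) (t + 1) l) =
      h t (tauSeq (walkIs ks) (walkJs h ks) t l) :=
  apply_replFn_dupIndex _ _ _

variable {h : ℕ → Fin n → β} {ks : ℕ → Fin n} {m : ℕ} {i : Fin n}

theorem tauSeq_walk_succ_ne (heq : ∀ t < m, EqExcept (ks (t + 1)) (h t) (h (t + 1)))
    (hmove : ∀ t < m, h t ≠ h (t + 1)) {t : ℕ} (ht : t < m) {l : Fin n}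
    (hl : h t (tauSeq (walkIs ks) (walkJs h ks) t l) ∈ Set.range (h (t + 1))) :
    tauSeq (walkIs ks) (walkJs h ks) (t + 1) l ≠ ks (t + 1) :=
  replFn_dupIndex_ne (heq t ht) (hmove t ht) hl

theorem apply_tauSeq_walk (heq : ∀ t < m, EqExcept (ks (t + 1)) (h t) (h (t + 1)))
    (hmove : ∀ t < m, h t ≠ h (t + 1)) (hrange : ∀ t ≤ m, ∀ l ≠ i, h 0 l ∈ Set.range (h t)) :
    ∀ t ≤ m, ∀ l ≠ i, h t (tauSeq (walkIs ks) (walkJs h ks) t l) = h 0 l := by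
  intro t ht l hl
  induction t with
  | zero => rfl
  | succ t ih =>
    have ih := ih (by omega)
    have hne := tauSeq_walk_succ_ne heq hmove (by omega) (ih ▸ hrange (t + 1) ht l hl)
    rw [← heq t (by omega) _ hne, apply_tauSeq_walk_succ h ks, ih]

theorem IsRC6.walk_label_le_lhsSeq [BooleanAlgebra α] {A : CylOps n α} (hA : IsRC6 A)
    {L : (Fin n → β) → α} (hdiag : ∀ t ≤ m, ∀ j k, h t j = h t k → L (h t) ≤ A.d j k)
    (hle : ∀ t < m, L (h (t + 1)) ≤ A.c (ks (t + 1)) (L (h t))) :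
    ∀ t ≤ m, L (h t) ≤ lhsSeq A (walkIs ks) (walkJs h ks) ks (L (h 0)) (t + 1) := by
  have hd : ∀ t ≤ m, L (h t) ≤ A.d (ks (t + 1)) (dupIndex (h t) (ks (t + 1))) :=
    fun t ht => hdiag t ht _ _ (apply_dupIndex _ _).symm
  intro t ht
  induction t with
  | zero => exact hA.le_s (hA.ax2 _ _) fun _ => hd 0 ht
  | succ t ih =>
    exact hA.le_s ((hle t ht).trans (hA.c_mono (ih (by omega)))) fun _ => hd (t + 1) ht

theorem IsRC.label_le_c_of_walk [BooleanAlgebra α] {A : CylOps n α} (hA : IsRC A)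
    {L : (Fin n → β) → α} (hks : ks 0 = i)
    (hdiag : ∀ t ≤ m, ∀ j k, h t j = h t k → L (h t) ≤ A.d j k)
    (hle : ∀ t < m, L (h (t + 1)) ≤ A.c (ks (t + 1)) (L (h t)))
    (heq : ∀ t < m, EqExcept (ks (t + 1)) (h t) (h (t + 1)))
    (hmove : ∀ t < m, h t ≠ h (t + 1))
    (hrange : ∀ t ≤ m, ∀ l ≠ i, h 0 l ∈ Set.range (h t))
    (hend : EqExcept i (h m) (h 0)) :
    L (h m) ≤ A.c i (L (h 0)) := by
  have htrack := apply_tauSeq_walk heq hmove hrange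
  have hside : ∀ t < m + 1,
      ks t ∉ (Kset (m + 1) (walkIs ks) ks i).image (tauSeq (walkIs ks) (walkJs h ks) t) := by
    intro t ht hmem
    obtain ⟨l, hlK, hl⟩ := Finset.mem_image.1 hmem
    have hli : l ≠ i := Finset.ne_of_mem_erase hlK
    cases t with
    | zero => exact hli (hl.trans hks)
    | succ t =>
      exact tauSeq_walk_succ_ne heq hmove (by omega)
        (htrack t (by omega) l hli ▸ hrange (t + 1) (by omega) l hli) hl
  have hdiagonal : L (h m) ≤
      (Kset (m + 1) (walkIs ks) ks i).inf
        (fun l => A.d l (tauSeq (walkIs ks) (walkJs h ks) (m + 1) l)) := by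
    refine Finset.le_inf fun l hlK => hdiag m le_rfl _ _ ?_
    have hli : l ≠ i := Finset.ne_of_mem_erase hlK
    rw [apply_tauSeq_walk_succ h ks, htrack m le_rfl l hli, hend l hli]
  exact (le_inf (hA.walk_label_le_lhsSeq hdiag hle m le_rfl) hdiagonal).trans
    (hA.ax7 (m + 1) (by omega) _ _ ks i hside _)

end Walk

section Network

variable [BooleanAlgebra α] {A : CylOps n α} {N : PreNetwork n α β} {f g : Fin n → β}
  {i : Fin n}

theorem IsZigzag.exists_steps {m : ℕ} {h : ℕ → Fin n → β} (hz : IsZigzag A N f g m h)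
    (i : Fin n) :
    ∃ ks : ℕ → Fin n, ks 0 = i ∧ ∀ t < m, h t ≠ h (t + 1) ∧
      EqExcept (ks (t + 1)) (h t) (h (t + 1)) ∧
      A.c (ks (t + 1)) (N.label (h t)) = A.c (ks (t + 1)) (N.label (h (t + 1))) := by
  have : Nonempty (Fin n) := ⟨i⟩
  choose! e he using hz.2.2.2.2
  exact ⟨fun t => if t = 0 then i else e (t - 1), rfl, fun t ht => by simpa using he t ht⟩

theorem IsRC.label_le_c_of_zigzag (hA : IsRC A)
    (hdiag : ∀ f ∈ N.edges, ∀ j k : Fin n, N.label f ≤ A.d j k ↔ f j = f k)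
    {m : ℕ} {h : ℕ → Fin n → β} (hz : IsZigzag A N g f m h) (hfg : EqExcept i f g) :
    N.label f ≤ A.c i (N.label g) := by
  obtain ⟨ks, hks, hsteps⟩ := hz.exists_steps i
  obtain ⟨rfl, rfl, hedge, hrange, -⟩ := hz
  refine hA.label_le_c_of_walk hks (fun t ht j k hjk => (hdiag _ (hedge t ht) j k).2 hjk)
    (fun t ht => ?_) (fun t ht => (hsteps t ht).2.1) (fun t ht => (hsteps t ht).1)
    (fun t ht l hl => hrange t ht ⟨⟨l, rfl⟩, ⟨l, hfg l hl⟩⟩) hfg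
  rw [(hsteps t ht).2.2]
  exact hA.ax2 _ _

theorem IsNetwork.label_le_c_of_eqExcept {κ : CylClass} (hA : InClass κ A)
    (hN : IsNetwork κ A N) (hn : 2 ≤ n) (hf : f ∈ N.edges) (hg : g ∈ N.edges)
    (hfg : EqExcept i f g) : N.label f ≤ A.c i (N.label g) := by
  obtain ⟨-, -, hdiag, hzigzag⟩ := hN
  rcases eq_or_ne g f with rfl | hne
  · exact hA.isRC.ax2 _ _
  obtain ⟨m, h, hz⟩ := hzigzag g hg f hf (hfg.symm.ncard_range_inter_pos hn)
    (hfg.symm.ncard_range_inter_lt hne)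
  exact hA.isRC.label_le_c_of_zigzag hdiag hz hfg

end Network

theorem statement_6_general (n : ℕ) (hn : 2 ≤ n) {α : Type*} {β : Type*}
    [CompleteBooleanAlgebra α]
    (κ : CylClass) (A : CylOps n α) (hA : InClass κ A)
    (N : PreNetwork n α β) (hN : IsNetwork κ A N)
    (f g : Fin n → β) (hf : f ∈ N.edges) (hg : g ∈ N.edges)
    (i : Fin n) (hfg : EqExcept i f g) :
    A.c i (N.label f) = A.c i (N.label g) :=
  le_antisymm (hA.isRC.c_le_of_le_c (hN.label_le_c_of_eqExcept hA hn hf hg hfg))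
    (hA.isRC.c_le_of_le_c (hN.label_le_c_of_eqExcept hA hn hg hf hfg.symm))

/-- for `K ∈ {RC, DC, SC}`, complete atomic `A ∈ K_n` and a network `N`:
if `f, g ∈ edges(N)` and `f ≡_i g` then `c_i N(f) = c_i N(g)`. -/
theorem statement_6 (n : ℕ) (hn : 2 ≤ n) {α : Type*} {β : Type*}
    [CompleteBooleanAlgebra α] [IsAtomic α]
    (κ : CylClass) (A : CylOps n α) (hA : InClass κ A)
    (N : PreNetwork n α β) (hN : IsNetwork κ A N)
    (f g : Fin n → β) (hf : f ∈ N.edges) (hg : g ∈ N.edges)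
    (i : Fin n) (hfg : EqExcept i f g) :
    A.c i (N.label f) = A.c i (N.label g) :=
  statement_6_general n hn κ A hA N hN f g hf hg i hfg

end CylRep
end
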